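/- Let R be a commutative ring with identity, S a multiplicative subset of R, and s ∈ S with s² = s such that R is uniformly S-Boolean with respect to s, i.e., every x ∈ R satisfies x² = x or x² = sx. Let I be an ideal of R with I ∩ S = ∅, and let J be the intersection of all S-maximal ideals of R containing I. Then s·J ⊆ I ⊆ J. -/
import Mathlib


section

variable {R : Type*} [CommRing R] (S : Submonoid R)

/-- An ideal `M` is `S`-maximal if `M ∩ S = ∅` and there exists `t ∈ S` such that
for every ideal `K` containing `M`, either `t • K ⊆ M` or `K ∩ S ≠ ∅`. -/
def SMaximal (M : Ideal R) : Prop :=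
  Disjoint (M : Set R) (S : Set R) ∧
    ∃ t ∈ S, ∀ K : Ideal R, M ≤ K → (∀ x ∈ K, t * x ∈ M) ∨ ∃ x ∈ K, x ∈ S

/-- Zorn's lemma for families of ideals closed under suprema of nonempty chains. -/
lemma exists_maximal_mem_ideal_family {R : Type*} [CommRing R] (F : Set (Ideal R))
    (hF : ∀ c ⊆ F, IsChain (· ≤ ·) c → c.Nonempty → sSup c ∈ F)
    (B : Ideal R) (hB : B ∈ F) : ∃ M, B ≤ M ∧ Maximal (· ∈ F) M := by
  refine zorn_le_nonempty₀ F (fun c hc hchain y hy => ?_) B hB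
  exact ⟨sSup c, hF c hc hchain ⟨y, hy⟩, fun z hz => le_sSup hz⟩

/-- If `R` is uniformly `S`-Boolean with respect to an idempotent `s ∈ S` and `I`
is an ideal disjoint from `S`, then `s • J ⊆ I ⊆ J`, where `J` is the
intersection of all `S`-maximal ideals containing `I`. -/
theorem sBoolean_primary_decomposition
    (s : R) (hs : s ∈ S) (hs2 : s ^ 2 = s)
    (hbool : ∀ x : R, x ^ 2 = x ∨ x ^ 2 = s * x)
    (I : Ideal R) (hI : Disjoint (I : Set R) (S : Set R)) :
    (∀ x ∈ sInf {M : Ideal R | SMaximal S M ∧ I ≤ M}, s * x ∈ I) ∧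
      I ≤ sInf {M : Ideal R | SMaximal S M ∧ I ≤ M} := by
  -- `s * k` is always idempotent
  have hidem : ∀ k : R, (s * k) * (s * k) = s * k := by
    intro k
    have h1 : (s * k) * (s * k) = s * k ^ 2 := by
      have : (s * k) * (s * k) = s ^ 2 * k ^ 2 := by ring
      rw [this, hs2]
    rcases hbool k with h | h
    · rw [h1, h]
    · rw [h1, h]
      have h2 : s * (s * k) = s ^ 2 * k := by ring
      rw [h2, hs2]
  constructor
  · intro x hx
    set e : R := s * x with he_def
    have he2 : e * e = e := hidem x
    -- Step 1: there is `t ∈ S` with `t * e ∈ I`.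
    have step1 : ∃ t ∈ S, t * e ∈ I := by
      by_contra h1
      push_neg at h1
      -- the colon ideal (I : e)
      set C : Ideal R :=
        { carrier := {r : R | r * e ∈ I}
          add_mem' := fun {a b} ha hb => by
            simpa [add_mul] using I.add_mem ha hb
          zero_mem' := by simp
          smul_mem' := fun c a ha => by
            simpa [smul_eq_mul, mul_assoc] using I.mul_mem_left c ha } with hC_def
      have hmemC : ∀ r : R, r ∈ C ↔ r * e ∈ I := fun r => Iff.rfl
      set D : Ideal R := C ⊔ Ideal.span {1 - e} with hD_def
      -- the family of ideals containing `D` and disjoint from `S`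
      set F : Set (Ideal R) := {N : Ideal R | D ≤ N ∧ Disjoint (N : Set R) (S : Set R)}
        with hF_def
      have hDF : D ∈ F := by
        refine ⟨le_rfl, Set.disjoint_left.2 fun u huD huS => ?_⟩
        rw [SetLike.mem_coe, hD_def, Submodule.mem_sup] at huD
        obtain ⟨c, hc, z, hz, hcz⟩ := huD
        rw [Ideal.mem_span_singleton'] at hz
        obtain ⟨r, hr⟩ := hz
        have hue : u * e ∈ I := by
          have : u * e = c * e + r * ((1 - e) * e) := by rw [← hcz, ← hr]; ring
          have hz0 : (1 - e) * e = 0 := by rw [sub_mul, one_mul, he2, sub_self]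
          rw [this, hz0, mul_zero, add_zero]
          exact (hmemC c).1 hc
        exact h1 u huS hue
      have hFclosed : ∀ c ⊆ F, IsChain (· ≤ ·) c → c.Nonempty → sSup c ∈ F := by
        intro c hc hchain hne
        refine ⟨le_trans (hc hne.choose_spec).1 (le_sSup hne.choose_spec), ?_⟩
        rw [Set.disjoint_left]
        intro z hz hzS
        rw [SetLike.mem_coe, Submodule.mem_sSup_of_directed hne hchain.directedOn] at hz
        obtain ⟨N, hNc, hzN⟩ := hz
        exact Set.disjoint_left.1 (hc hNc).2 hzN hzS
      obtain ⟨M, hDM, hMmax⟩ := exists_maximal_mem_ideal_family F hFclosed D hDF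
      -- `M` is `S`-maximal (witness `s`)
      have hMS : SMaximal S M := by
        refine ⟨hMmax.prop.2, s, hs, fun K hMK => ?_⟩
        by_cases hKS : ∃ y ∈ K, y ∈ S
        · exact Or.inr hKS
        push_neg at hKS
        refine Or.inl fun k hk => ?_
        by_contra hfM
        have hN' : M ⊔ Ideal.span {s * k} ∈ F := by
          refine ⟨le_trans hDM le_sup_left, ?_⟩
          have hle : M ⊔ Ideal.span {s * k} ≤ K := by
            refine sup_le hMK ?_
            rw [Ideal.span_le, Set.singleton_subset_iff]
            exact K.mul_mem_left s hk
          exact Set.disjoint_left.2 fun z hz hzS => hKS z (hle hz) hzS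
        have := hMmax.2 hN' le_sup_left
        exact hfM (this (Submodule.mem_sup_right (Ideal.mem_span_singleton_self _)))
      -- but then `M` contains both `e` and `1 - e`, hence `1`, contradiction
      have hIM : I ≤ M := by
        refine le_trans ?_ (le_trans (le_sup_left : C ≤ D) hDM)
        intro i hi
        exact (hmemC i).2 (I.mul_mem_right e hi)
      have hxM : x ∈ M := Submodule.mem_sInf.1 hx M ⟨hMS, hIM⟩
      have heM : e ∈ M := M.mul_mem_left s hxM
      have h1eM : (1 : R) - e ∈ M :=
        (le_trans (le_sup_right : Ideal.span {1 - e} ≤ D) hDM)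
          (Ideal.mem_span_singleton_self _)
      have h1M : (1 : R) ∈ M := by
        have := M.add_mem h1eM heM
        simpa using this
      exact Set.disjoint_left.1 hMmax.prop.2 h1M (S.one_mem)
    obtain ⟨t, htS, hte⟩ := step1
    -- Step 2: `e ∈ I`.
    by_contra heI
    set F : Set (Ideal R) :=
      {N : Ideal R | I ≤ N ∧ Disjoint (N : Set R) (S : Set R) ∧ e ∉ N} with hF_def
    have hIF : I ∈ F := ⟨le_rfl, hI, heI⟩
    have hFclosed : ∀ c ⊆ F, IsChain (· ≤ ·) c → c.Nonempty → sSup c ∈ F := by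
      intro c hc hchain hne
      refine ⟨le_trans (hc hne.choose_spec).1 (le_sSup hne.choose_spec), ?_, ?_⟩
      · rw [Set.disjoint_left]
        intro z hz hzS
        rw [SetLike.mem_coe, Submodule.mem_sSup_of_directed hne hchain.directedOn] at hz
        obtain ⟨N, hNc, hzN⟩ := hz
        exact Set.disjoint_left.1 (hc hNc).2.1 hzN hzS
      · intro hesup
        rw [Submodule.mem_sSup_of_directed hne hchain.directedOn] at hesup
        obtain ⟨N, hNc, heN⟩ := hesup
        exact (hc hNc).2.2 heN
    obtain ⟨M, hIM, hMmax⟩ := exists_maximal_mem_ideal_family F hFclosed I hIF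
    have heM : e ∉ M := hMmax.prop.2.2
    -- `M` is `S`-maximal with witness `s * t`
    have hMS : SMaximal S M := by
      refine ⟨hMmax.prop.2.1, s * t, S.mul_mem hs htS, fun K hMK => ?_⟩
      by_cases hKS : ∃ y ∈ K, y ∈ S
      · exact Or.inr hKS
      push_neg at hKS
      refine Or.inl fun k hk => ?_
      set f : R := s * k with hf_def
      have hf2 : f * f = f := hidem k
      set g : R := f - f * e with hg_def
      have hgK : g ∈ K := K.sub_mem (K.mul_mem_left s hk) (K.mul_mem_right e (K.mul_mem_left s hk))
      have hgM : g ∈ M := by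
        by_contra hgM
        have hN' : e ∈ M ⊔ Ideal.span {g} := by
          by_contra heN'
          have hmem : M ⊔ Ideal.span {g} ∈ F := by
            refine ⟨le_trans hMmax.prop.1 le_sup_left, ?_, heN'⟩
            have hle : M ⊔ Ideal.span {g} ≤ K := by
              refine sup_le hMK ?_
              rw [Ideal.span_le, Set.singleton_subset_iff]
              exact hgK
            exact Set.disjoint_left.2 fun z hz hzS => hKS z (hle hz) hzS
          have := hMmax.2 hmem le_sup_left
          exact hgM (this (Submodule.mem_sup_right (Ideal.mem_span_singleton_self _)))
        rw [Submodule.mem_sup] at hN'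
        obtain ⟨m, hm, z, hz, hmz⟩ := hN'
        rw [Ideal.mem_span_singleton'] at hz
        obtain ⟨r, hr⟩ := hz
        -- e * g = 0 and g * g = g
        have heg : e * g = 0 := by
          rw [hg_def]
          have : e * (f - f * e) = f * e - f * (e * e) := by ring
          rw [this, he2, sub_self]
        have hgg : g * g = g := by
          rw [hg_def]
          have : (f - f * e) * (f - f * e) = f * f - (f * f) * e - ((f * f) * e - (f * f) * (e * e)) := by
            ring
          rw [this, hf2, he2, sub_self, sub_zero]
        have hrgM : r * g ∈ M := by
          have h0 : m * g + r * g = 0 := by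
            have : (m + r * g) * g = m * g + r * (g * g) := by ring
            rw [hgg] at this
            rw [← this, hr, hmz, heg]
          have : r * g = -(m * g) := by linear_combination h0
          rw [this]
          exact M.neg_mem (M.mul_mem_right g hm)
        exact heM (by rw [← hmz, ← hr]; exact M.add_mem hm hrgM)
      -- now `(s*t)*k = (t*e)*f + t*g ∈ M`
      have hkey : s * t * k = t * e * (s * k) + t * (s * k - s * k * e) := by ring
      rw [hkey]
      exact M.add_mem (M.mul_mem_right (s * k) (hIM hte)) (M.mul_mem_left t hgM)
    have hxM : x ∈ M := Submodule.mem_sInf.1 hx M ⟨hMS, hIM⟩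
    exact heM (M.mul_mem_left s hxM)
  · exact le_sInf fun M hM => hM.2
end
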